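/- Let $G$ be a group and let $u_1, v_1, \ldots, u_r, v_r \in G$. Then for every positive integer $k$, the element $([u_1,v_1][u_2,v_2]\cdots[u_r,v_r])^k$ can be written as a product of $k(r-1) + \lfloor k/2 \rfloor + 1$ commutators. -/

import Mathlib

open Filter
open scoped commutatorElement

/-- `x` is a product of `n` commutators. -/
def IsProdComm {G : Type*} [Group G] (n : ℕ) (x : G) : Prop :=
  ∃ l : List (G × G), l.length = n ∧ x = (l.map fun p => ⁅p.1, p.2⁆).prod

/-- Commutator length: minimal number of commutators whose product is `x`. -/
noncomputable def cl {G : Type*} [Group G] (x : G) : ℕ :=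
  sInf {n | IsProdComm n x}

/-!
Culler: writing `c = ⁅a, b⁆`, the remainder `b⁻¹ cᵐ ⁅a, b²⁆ b cᵐ` is a product of `m + 1`
commutators, since passing from `m` to `m + 1` multiplies it by a conjugate of `⁅b⁻¹ a, b²⁆`;
and `c^(2m+3)` is one commutator times this remainder. Hence `cᵏ` is a product of `⌊k/2⌋ + 1`
commutators. For a product `x h` with `h` a product of `r - 1` commutators,
`(x h)ᵏ = (x h x⁻¹)(x² h x⁻²) ⋯ (xᵏ h x⁻ᵏ) xᵏ`, so taking `x = ⁅u₁, v₁⁆` gives the bound.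
-/

section

variable {G H : Type*} [Group G] [Group H]

theorem isProdComm_map_prod (l : List (G × G)) :
    IsProdComm l.length (l.map fun p => ⁅p.1, p.2⁆).prod :=
  ⟨l, rfl, rfl⟩

theorem isProdComm_commutatorElement (a b : G) : IsProdComm 1 ⁅a, b⁆ := by
  simpa using isProdComm_map_prod [(a, b)]

theorem isProdComm_one (n : ℕ) : IsProdComm n (1 : G) :=
  ⟨List.replicate n (1, 1), List.length_replicate, by simp⟩

theorem IsProdComm.mul {m n : ℕ} {x y : G} (hx : IsProdComm m x) (hy : IsProdComm n y) :
    IsProdComm (m + n) (x * y) := by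
  obtain ⟨l₁, rfl, rfl⟩ := hx
  obtain ⟨l₂, rfl, rfl⟩ := hy
  exact ⟨l₁ ++ l₂, List.length_append, by simp⟩

theorem IsProdComm.map {F : Type*} [FunLike F G H] [MonoidHomClass F G H] {n : ℕ} {x : G}
    (hx : IsProdComm n x) (f : F) : IsProdComm n (f x) := by
  obtain ⟨l, rfl, rfl⟩ := hx
  exact ⟨l.map (Prod.map f f), List.length_map _,
    by simp [map_list_prod, Function.comp_def, map_commutatorElement]⟩

theorem IsProdComm.conj {n : ℕ} {x : G} (hx : IsProdComm n x) (g : G) :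
    IsProdComm n (g * x * g⁻¹) := by
  simpa only [MulAut.conj_apply] using hx.map (MulAut.conj g)

theorem IsProdComm.exists_mul_pow_eq {n : ℕ} {h : G} (hh : IsProdComm n h) (x : G) :
    ∀ k : ℕ, ∃ P : G, IsProdComm (k * n) P ∧ (x * h) ^ k = P * x ^ k
  | 0 => ⟨1, isProdComm_one _, by simp⟩
  | k + 1 => by
    obtain ⟨P, hP, hpow⟩ := hh.exists_mul_pow_eq x k
    refine ⟨x * (h * P) * x⁻¹, ?_, ?_⟩
    · simpa only [Nat.succ_mul, Nat.add_comm] using (hh.mul hP).conj x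
    · rw [pow_succ', hpow]
      group

def cullerRemainder (a b : G) (m : ℕ) : G :=
  b⁻¹ * ⁅a, b⁆ ^ m * ⁅a, b ^ 2⁆ * b * ⁅a, b⁆ ^ m

theorem cullerRemainder_zero (a b : G) : cullerRemainder a b 0 = ⁅b⁻¹ * a * b, b ^ 2⁆ := by
  simp only [cullerRemainder, pow_zero, commutatorElement_def]
  group

theorem cullerRemainder_succ (a b : G) (m : ℕ) :
    cullerRemainder a b (m + 1) =
      (b⁻¹ * ⁅a, b⁆ ^ (m + 1) * b) * ⁅b⁻¹ * a, b ^ 2⁆ * (b⁻¹ * ⁅a, b⁆ ^ (m + 1) * b)⁻¹ *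
        cullerRemainder a b m := by
  simp only [cullerRemainder]
  rw [pow_succ]
  nth_rewrite 2 [pow_mul_comm']
  generalize ⁅a, b⁆ ^ m = C
  simp only [commutatorElement_def]
  group

theorem commutatorElement_pow_two_mul_add_three (a b : G) (m : ℕ) :
    ⁅a, b⁆ ^ (2 * m + 3) =
      ⁅a * b * a⁻¹, b⁻¹ * ⁅a, b⁆ ^ (m + 1) * a⁻¹⁆ * cullerRemainder a b m := by
  simp only [cullerRemainder]
  rw [show 2 * m + 3 = 1 + m + 1 + 1 + m by ring, pow_add, pow_add, pow_add, pow_add, pow_one,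
    pow_succ]
  generalize ⁅a, b⁆ ^ m = C
  simp only [commutatorElement_def]
  group

theorem isProdComm_cullerRemainder (a b : G) :
    ∀ m : ℕ, IsProdComm (m + 1) (cullerRemainder a b m)
  | 0 => by
    rw [cullerRemainder_zero]
    exact isProdComm_commutatorElement _ _
  | m + 1 => by
    rw [cullerRemainder_succ, Nat.add_comm (m + 1)]
    exact ((isProdComm_commutatorElement _ _).conj _).mul (isProdComm_cullerRemainder a b m)

theorem isProdComm_commutatorElement_pow_two_mul_add_one (a b : G) :
    ∀ m : ℕ, IsProdComm (m + 1) (⁅a, b⁆ ^ (2 * m + 1))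
  | 0 => by simpa using isProdComm_commutatorElement a b
  | m + 1 => by
    rw [show 2 * (m + 1) + 1 = 2 * m + 3 by ring, commutatorElement_pow_two_mul_add_three,
      Nat.add_comm (m + 1)]
    exact (isProdComm_commutatorElement _ _).mul (isProdComm_cullerRemainder a b m)

theorem isProdComm_commutatorElement_pow (a b : G) (k : ℕ) :
    IsProdComm (k / 2 + 1) (⁅a, b⁆ ^ k) := by
  obtain ⟨m, rfl | rfl⟩ := Nat.even_or_odd' k
  · cases m with
    | zero => simpa using isProdComm_one (G := G) 1
    | succ m =>
      rw [show 2 * (m + 1) = 2 * m + 1 + 1 by ring, pow_succ,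
        show (2 * m + 1 + 1) / 2 = m + 1 by omega]
      exact (isProdComm_commutatorElement_pow_two_mul_add_one a b m).mul
        (isProdComm_commutatorElement a b)
  · rw [show (2 * m + 1) / 2 = m by omega]
    exact isProdComm_commutatorElement_pow_two_mul_add_one a b m

end

theorem culler_bavard_general {G : Type*} [Group G] (r : ℕ)
    (u v : Fin r → G) (k : ℕ) :
    IsProdComm (k * (r - 1) + k / 2 + 1)
      (((List.ofFn fun i => ⁅u i, v i⁆).prod) ^ k) := by
  cases r with
  | zero => simpa using isProdComm_one (G := G) _
  | succ r =>
    have htail : IsProdComm r (List.ofFn fun i : Fin r => ⁅u i.succ, v i.succ⁆).prod := by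
      simpa [List.map_ofFn, Function.comp_def] using
        isProdComm_map_prod (List.ofFn fun i : Fin r => (u i.succ, v i.succ))
    obtain ⟨P, hP, hpow⟩ := htail.exists_mul_pow_eq ⁅u 0, v 0⁆ k
    rw [List.ofFn_succ, List.prod_cons, hpow, Nat.add_sub_cancel, Nat.add_assoc]
    exact hP.mul (isProdComm_commutatorElement_pow (u 0) (v 0) k)

theorem culler_bavard {G : Type*} [Group G] (r : ℕ) (hr : 1 ≤ r)
    (u v : Fin r → G) (k : ℕ) (hk : 1 ≤ k) :
    IsProdComm (k * (r - 1) + k / 2 + 1)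
      (((List.ofFn fun i => ⁅u i, v i⁆).prod) ^ k) :=
  culler_bavard_general r u v k
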